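/- Define Γ = Σ_{σ,σ' ∈ S₅} sgn(σ)·sgn(σ') · (e_{σ(1)} ∧ e_{σ(2)}) ⊗ (e_{σ(3)} ∧ e_{σ(4)}) ⊗ (e_{σ'(1)} ∧ e_{σ'(2)}) ⊗ (e_{σ'(3)} ∧ e_{σ'(4)}) ⊗ (e_{σ(5)} ∧ e_{σ'(5)}), an element of the 5-fold tensor power (⋀²V)^{⊗5}. Then Γ is SL(V)-invariant: for every g ∈ SL(5,ℂ), acting on (⋀²V)^{⊗5} via the 5-fold tensor power of the induced map ⋀²g : ⋀²V → ⋀²V, one has ((⋀²g)^{⊗5})(Γ) = Γ. -/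

import Mathlib

open ExteriorAlgebra

/-- `V = ℂ⁵`, with standard basis `e₁, …, e₅`. -/
abbrev V : Type := Fin 5 → ℂ

/-- The exterior algebra of `V`, in which degree-2 elements are the 2-vectors of `⋀²V`. -/
abbrev E : Type := ExteriorAlgebra ℂ V

/-- The standard basis vector `eᵢ` of `V = ℂ⁵`. -/
noncomputable def e (i : Fin 5) : V := Pi.single i 1

/-- The 2-vector `eᵢ ∧ eⱼ`. -/
noncomputable def w (i j : Fin 5) : E := ι ℂ (e i) * ι ℂ (e j)

/-- The 5-fold tensor power `(⋀²V)^{⊗5}` (realised inside the 5-fold tensor power of the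
exterior algebra). -/
abbrev T : Type := PiTensorProduct ℂ (fun _ : Fin 5 => E)

/-- The element
`Γ = Σ_{σ,σ'∈S₅} sgn(σ)sgn(σ') (e_{σ(1)}∧e_{σ(2)}) ⊗ (e_{σ(3)}∧e_{σ(4)}) ⊗
(e_{σ'(1)}∧e_{σ'(2)}) ⊗ (e_{σ'(3)}∧e_{σ'(4)}) ⊗ (e_{σ(5)}∧e_{σ'(5)})` of `(⋀²V)^{⊗5}`. -/
noncomputable def Γ : T :=
  ∑ σ : Equiv.Perm (Fin 5), ∑ σ' : Equiv.Perm (Fin 5),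
    (((Equiv.Perm.sign σ : ℤ) : ℂ) * ((Equiv.Perm.sign σ' : ℤ) : ℂ)) •
      PiTensorProduct.tprod ℂ
        ![w (σ 0) (σ 1), w (σ 2) (σ 3), w (σ' 0) (σ' 1), w (σ' 2) (σ' 3), w (σ 4) (σ' 4)]

/-!
`Γ` is the value at `(e, e)` of the double alternatization of the bimultilinear map
`Ψ(v, u) = (v₀∧v₁) ⊗ (v₂∧v₃) ⊗ (u₀∧u₁) ⊗ (u₂∧u₃) ⊗ (v₄∧u₄)`, which commutes with the action of
`GL(V)`. An alternating map `f` of top degree satisfies `f (g ∘ v) = det g • f v`, so `g` multiplies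
`Γ` by `(det g)²`, which is `1` on `SL(V)`.
-/

namespace AlternatingMap

variable {R M N ι : Type*} [CommRing R] [AddCommGroup M] [Module R M] [AddCommGroup N]
  [Module R N] [Fintype ι] [DecidableEq ι]

theorem eq_smulRight_basis_det (b : Module.Basis ι R M) (f : M [⋀^ι]→ₗ[R] N) :
    f = b.det.smulRight (f b) := by
  refine b.ext_alternating fun i h => ?_
  let σ : Equiv.Perm ι := Equiv.ofBijective i (Finite.injective_iff_bijective.1 h)
  change f (b ∘ σ) = b.det (b ∘ σ) • f b
  simp [AlternatingMap.map_perm, Module.Basis.det_self]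

theorem apply_comp_eq_det_smul (b : Module.Basis ι R M) (f : M [⋀^ι]→ₗ[R] N) (g : M →ₗ[R] M)
    (v : ι → M) : f (g ∘ v) = LinearMap.det g • f v := by
  rw [eq_smulRight_basis_det b f]
  simp only [smulRight_apply, Module.Basis.det_comp, mul_smul]

end AlternatingMap

namespace MultilinearMap

variable {R M N N' ι : Type*} [CommRing R] [AddCommGroup M] [Module R M] [AddCommGroup N]
  [Module R N] [AddCommGroup N'] [Module R N'] [Fintype ι] [DecidableEq ι]

theorem alternatization_smul (c : R) (m : MultilinearMap R (fun _ : ι => M) N) :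
    alternatization (c • m) = c • alternatization m := by
  ext v
  simp [alternatization_apply, Finset.smul_sum, smul_comm c]

def alternatization₂ (Ψ : MultilinearMap R (fun _ : ι => M) (MultilinearMap R (fun _ : ι => M) N))
    (v u : ι → M) : N :=
  alternatization (alternatization Ψ v) u

variable (Ψ : MultilinearMap R (fun _ : ι => M) (MultilinearMap R (fun _ : ι => M) N))

theorem alternatization₂_apply (v u : ι → M) :
    alternatization₂ Ψ v u = ∑ σ : Equiv.Perm ι, ∑ σ' : Equiv.Perm ι,
      ((Equiv.Perm.sign σ * Equiv.Perm.sign σ' : ℤˣ) : ℤ) • Ψ (v ∘ σ) (u ∘ σ') := by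
  simp only [alternatization₂, alternatization_apply, domDomCongr_apply, sum_apply, smul_apply,
    Finset.smul_sum]
  rw [Finset.sum_comm]
  refine Finset.sum_congr rfl fun σ _ => Finset.sum_congr rfl fun σ' _ => ?_
  rw [Units.smul_def, Units.smul_def, smul_smul, Units.val_mul, mul_comm]
  rfl

theorem alternatization₂_comp_eq_det_sq_smul (b : Module.Basis ι R M) (g : M →ₗ[R] M)
    (v u : ι → M) :
    alternatization₂ Ψ (g ∘ v) (g ∘ u) = LinearMap.det g ^ 2 • alternatization₂ Ψ v u := by
  simp only [alternatization₂, AlternatingMap.apply_comp_eq_det_smul b, alternatization_smul,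
    AlternatingMap.smul_apply, smul_smul, sq]

theorem _root_.LinearMap.map_alternatization₂ (φ : N →ₗ[R] N') (g : M →ₗ[R] M)
    (Ψ' : MultilinearMap R (fun _ : ι => M) (MultilinearMap R (fun _ : ι => M) N'))
    (h : ∀ v u, φ (Ψ v u) = Ψ' (g ∘ v) (g ∘ u)) (v u : ι → M) :
    φ (alternatization₂ Ψ v u) = alternatization₂ Ψ' (g ∘ v) (g ∘ u) := by
  simp only [alternatization₂_apply, _root_.map_sum, _root_.map_zsmul, h]
  rfl

end MultilinearMap

section WedgeTprod

variable (R M : Type*) [CommRing R] [AddCommGroup M] [Module R M] (ι : Type*) (n : ℕ)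

noncomputable def wedgeTprod :
    MultilinearMap R (fun _ : Σ _ : ι, Fin n => M)
      (PiTensorProduct R fun _ : ι => ExteriorAlgebra R M) :=
  (PiTensorProduct.tprod R).compMultilinearMap fun _ => (ιMulti R n).toMultilinearMap

variable {R M ι n}

theorem wedgeTprod_apply (m : (Σ _ : ι, Fin n) → M) :
    wedgeTprod R M ι n m = PiTensorProduct.tprod R fun i => ιMulti R n fun k => m ⟨i, k⟩ :=
  rfl

theorem map_wedgeTprod {M' : Type*} [AddCommGroup M'] [Module R M'] (f : M →ₗ[R] M')
    (m : (Σ _ : ι, Fin n) → M) :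
    PiTensorProduct.map (fun _ => (ExteriorAlgebra.map f).toLinearMap) (wedgeTprod R M ι n m)
      = wedgeTprod R M' ι n (f ∘ m) := by
  simp only [wedgeTprod_apply, PiTensorProduct.map_tprod, AlgHom.toLinearMap_apply,
    map_apply_ιMulti]
  rfl

end WedgeTprod

/-- Slot `j` of `Ψ(v, u)` wedges the vectors indexed by `pairing ⟨j, 0⟩` and `pairing ⟨j, 1⟩`,
where `inl k` stands for `v k` and `inr k` for `u k`. -/
def pairing : (Σ _ : Fin 5, Fin 2) ≃ Fin 5 ⊕ Fin 5 where
  toFun p := ![![.inl 0, .inl 1], ![.inl 2, .inl 3], ![.inr 0, .inr 1], ![.inr 2, .inr 3],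
    ![.inl 4, .inr 4]] p.1 p.2
  invFun := Sum.elim ![⟨0, 0⟩, ⟨0, 1⟩, ⟨1, 0⟩, ⟨1, 1⟩, ⟨4, 0⟩]
    ![⟨2, 0⟩, ⟨2, 1⟩, ⟨3, 0⟩, ⟨3, 1⟩, ⟨4, 1⟩]
  left_inv := by decide
  right_inv := by decide

noncomputable def gammaForm :
    MultilinearMap ℂ (fun _ : Fin 5 => V) (MultilinearMap ℂ (fun _ : Fin 5 => V) T) :=
  ((wedgeTprod ℂ V (Fin 5) 2).domDomCongr pairing).currySum

theorem map_gammaForm (g : V →ₗ[ℂ] V) (v u : Fin 5 → V) :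
    PiTensorProduct.map (fun _ => (ExteriorAlgebra.map g).toLinearMap) (gammaForm v u)
      = gammaForm (g ∘ v) (g ∘ u) := by
  simp only [gammaForm, MultilinearMap.currySum_apply', MultilinearMap.domDomCongr_apply,
    map_wedgeTprod, ← Sum.comp_elim]
  rfl

theorem gammaForm_apply (v u : Fin 5 → V) :
    gammaForm v u = PiTensorProduct.tprod ℂ ![ιMulti ℂ 2 ![v 0, v 1], ιMulti ℂ 2 ![v 2, v 3],
      ιMulti ℂ 2 ![u 0, u 1], ιMulti ℂ 2 ![u 2, u 3], ιMulti ℂ 2 ![v 4, u 4]] := by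
  simp only [gammaForm, MultilinearMap.currySum_apply', MultilinearMap.domDomCongr_apply,
    wedgeTprod_apply]
  refine congrArg (PiTensorProduct.tprod ℂ) (funext fun j => ?_)
  fin_cases j <;> refine congrArg (ιMulti ℂ 2) (funext fun k => ?_) <;> fin_cases k <;> rfl

theorem Γ_eq_alternatization₂ : Γ = MultilinearMap.alternatization₂ gammaForm e e := by
  rw [MultilinearMap.alternatization₂_apply, Γ]
  refine Finset.sum_congr rfl fun σ _ => Finset.sum_congr rfl fun σ' _ => ?_
  rw [gammaForm_apply, ← Int.cast_smul_eq_zsmul ℂ]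
  push_cast
  simp [w, ιMulti_apply]

/-- `Γ` is `SL(V)`-invariant: for every `g ∈ SL(5, ℂ)` (a linear
automorphism of `V = ℂ⁵` of determinant 1), acting on `(⋀²V)^{⊗5}` via the 5-fold tensor
power of the induced map `⋀²g` (given by `a ∧ b ↦ g(a) ∧ g(b)`), one has `g · Γ = Γ`. -/
theorem Gamma_SL5_invariant (g : V →ₗ[ℂ] V) (hg : LinearMap.det g = 1) :
    PiTensorProduct.map (fun _ : Fin 5 => (ExteriorAlgebra.map g).toLinearMap) Γ = Γ := by
  rw [Γ_eq_alternatization₂, LinearMap.map_alternatization₂ _ _ _ _ (map_gammaForm g),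
    MultilinearMap.alternatization₂_comp_eq_det_sq_smul _ (Pi.basisFun ℂ (Fin 5)), hg, one_pow,
    one_smul]
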